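/- Determinism of the refined system on the post-erasure suffix: let S be deterministic and input erasing, and suppose S(I) has trace t·(a!BE)(a?v)·u·(a!EE) reaching state s3, and S(I') (with I' differing from I only at the position of v) has trace t·(a!BE)(a?w)·u'·(a!EE) reaching state s3'. Then for any input-free trace z, s3 can perform z iff s3' can perform z. -/

import Mathlib

inductive Reaches {St L : Type} (tr : St → L → St → Prop) : St → List L → St → Prop
  | nil (s : St) : Reaches tr s [] s
  | cons {s s' s'' : St} {l : L} {t : List L} :
      tr s l s' → Reaches tr s' t s'' → Reaches tr s (l :: t) s''

inductive SysLabel (V : Type) where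
  | out (v : V)
  | inp (v : V)
  | beginE
  | endE
  | outB (v : V)

def SysLabel.isInp {V : Type} : SysLabel V → Bool
  | .inp _ => true
  | _ => false

/-- number of input labels `a?v` in a trace (the operator `i(t)`) -/
def icount {V : Type} (t : List (SysLabel V)) : ℕ := t.countP SysLabel.isInp

/-- the sequence of input values occurring in a trace -/
def inputsOf {V : Type} (t : List (SysLabel V)) : List V :=
  t.filterMap fun l => match l with | .inp v => some v | _ => none

/-- A system is deterministic: distinct labels from a state are both inputs,
and each label leads to at most one state. -/
def SysDet {St V : Type} (tr : St → SysLabel V → St → Prop) : Prop :=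
  (∀ s l₁ l₂ s₁ s₂, tr s l₁ s₁ → tr s l₂ s₂ → l₁ ≠ l₂ →
     ∃ v₁ v₂, l₁ = SysLabel.inp v₁ ∧ l₂ = SysLabel.inp v₂) ∧
  (∀ s l s₁ s₂, tr s l s₁ → tr s l s₂ → s₁ = s₂)

def countEEs {V : Type} (t : List (SysLabel V)) : ℕ :=
  t.countP fun l => match l with | .endE => true | _ => false

def countBEs {V : Type} (t : List (SysLabel V)) : ℕ :=
  t.countP fun l => match l with | .beginE => true | _ => false

/-- count of occurrences of the erasure-input pattern `(a!BE)(a?v)` -/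
def countBEIn {V : Type} : List (SysLabel V) → ℕ
  | .beginE :: .inp _ :: rest => countBEIn rest + 1
  | _ :: rest => countBEIn rest
  | [] => 0

/-- Well-formed system: BE is always followed by input-enabledness, and
BE/EE events are well bracketed. -/
def WellFormedSys {St V : Type} (tr : St → SysLabel V → St → Prop) (s0 : St) : Prop :=
  (∀ t s, Reaches tr s0 (t ++ [SysLabel.beginE]) s → ∀ v : V, ∃ s', tr s (SysLabel.inp v) s') ∧
  (∀ t s, Reaches tr s0 t s → ∀ t', t' <+: t → countEEs t' ≤ countBEIn t') ∧
  (∀ t s, Reaches tr s0 t s → (∀ l s', ¬ tr s l s') → countEEs t = countBEIn t)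

/-- `t` is a trace of the refinement `S(I)` (stream indexed from 0). -/
def InstTrace {St V : Type} (tr : St → SysLabel V → St → Prop) (s0 : St) (I : ℕ → V)
    (t : List (SysLabel V)) : Prop :=
  (∃ s, Reaches tr s0 t s) ∧
  ∀ n (h : n < (inputsOf t).length), (inputsOf t).get ⟨n, h⟩ = I n

/-- the BE/EE events inside a session body are balanced (so the closing EE matches
the opening BE). -/
def BalancedSys {V : Type} (u : List (SysLabel V)) : Prop :=
  countBEs u = countEEs u ∧ ∀ p, p <+: u → countEEs p ≤ countBEs p

/-- Abstract input erasure `E(S)`. -/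
def InputErasing {St V : Type} (tr : St → SysLabel V → St → Prop) (s0 : St) : Prop :=
  ∀ (I : ℕ → V) (t u z : List (SysLabel V)) (v : V),
    InstTrace tr s0 I (t ++ SysLabel.beginE :: SysLabel.inp v :: u ++ SysLabel.endE :: z) →
    BalancedSys u →
    ∀ I' : ℕ → V, (∀ m, m ≠ icount t → I m = I' m) →
      ∃ u', InstTrace tr s0 I'
          (t ++ SysLabel.beginE :: SysLabel.inp (I' (icount t)) :: u' ++ SysLabel.endE :: z) ∧
        BalancedSys u' ∧ icount u = icount u'

/-- a trace containing no input labels -/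
def InputFree {V : Type} (t : List (SysLabel V)) : Prop :=
  ∀ l ∈ t, ∀ v : V, l ≠ SysLabel.inp v

/-!
Both streams agree everywhere except at the erased position, so erasure transports the
run `S(I)` has after `s₃` to an `S(I')`-run whose session, like the given one, starts with
`a?w`. Determinism forces two runs that read consistent inputs to be comparable under the
prefix order, and a balanced session body is closed by the first unmatched `a!EE`, so the
two session bodies coincide and the transported run passes through `s₃'`.
-/

namespace Reaches

variable {St L : Type} {tr : St → L → St → Prop}

theorem append_iff {s s'' : St} {p q : List L} :
    Reaches tr s (p ++ q) s'' ↔ ∃ m, Reaches tr s p m ∧ Reaches tr m q s'' := by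
  induction p generalizing s with
  | nil => exact ⟨fun h => ⟨s, .nil s, h⟩, fun ⟨_, .nil _, h⟩ => h⟩
  | cons l p ih =>
    constructor
    · rintro (_ | ⟨hl, h⟩)
      obtain ⟨m, hp, hq⟩ := ih.mp h
      exact ⟨m, .cons hl hp, hq⟩
    · rintro ⟨m, _ | ⟨hl, hp⟩, hq⟩
      exact .cons hl (ih.mpr ⟨m, hp, hq⟩)

theorem eq_of_functional (hfun : ∀ s l s₁ s₂, tr s l s₁ → tr s l s₂ → s₁ = s₂)
    {s s₁ s₂ : St} {p : List L} (h₁ : Reaches tr s p s₁) (h₂ : Reaches tr s p s₂) :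
    s₁ = s₂ := by
  induction h₁ with
  | nil => cases h₂; rfl
  | cons hl _ ih =>
    obtain _ | ⟨hl', h₂⟩ := h₂
    exact ih (hfun _ _ _ _ hl' hl ▸ h₂)

theorem of_append_of_functional (hfun : ∀ s l s₁ s₂, tr s l s₁ → tr s l s₂ → s₁ = s₂)
    {s m y : St} {p q : List L} (h : Reaches tr s (p ++ q) y) (hp : Reaches tr s p m) :
    Reaches tr m q y := by
  obtain ⟨m', hp', hq⟩ := append_iff.mp h
  exact eq_of_functional hfun hp' hp ▸ hq

end Reaches

section Traces

variable {V : Type}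

@[simp]
theorem inputsOf_append (a b : List (SysLabel V)) :
    inputsOf (a ++ b) = inputsOf a ++ inputsOf b :=
  List.filterMap_append

@[simp]
theorem inputsOf_cons_inp (v : V) (t : List (SysLabel V)) :
    inputsOf (.inp v :: t) = v :: inputsOf t := rfl

@[simp]
theorem inputsOf_cons_beginE (t : List (SysLabel V)) :
    inputsOf (.beginE :: t) = inputsOf t := rfl

theorem length_inputsOf (t : List (SysLabel V)) : (inputsOf t).length = icount t := by
  rw [inputsOf, List.length_filterMap_eq_countP, icount]
  congr 1
  funext l
  cases l <;> rfl

theorem InputFree.inputsOf_eq_nil {z : List (SysLabel V)} (hz : InputFree z) :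
    inputsOf z = [] :=
  List.filterMap_eq_nil_iff.mpr fun l hl => by
    cases l <;> first | rfl | exact absurd rfl (hz _ hl _)

end Traces

theorem List.prefix_or_prefix_of_getElem_eq {α : Type} {l₁ l₂ : List α} {F : ℕ → α}
    (h₁ : ∀ n (h : n < l₁.length), l₁[n] = F n) (h₂ : ∀ n (h : n < l₂.length), l₂[n] = F n) :
    l₁ <+: l₂ ∨ l₂ <+: l₁ := by
  rcases le_total l₁.length l₂.length with hle | hle
  · exact .inl (List.prefix_iff_getElem.mpr ⟨hle, fun n hn => (h₁ n hn).trans (h₂ n _).symm⟩)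
  · exact .inr (List.prefix_iff_getElem.mpr ⟨hle, fun n hn => (h₂ n hn).trans (h₁ n _).symm⟩)

section Determinism

variable {St V : Type} {tr : St → SysLabel V → St → Prop}

theorem inputsOf_cons_comparable_iff (l : SysLabel V) (p q : List (SysLabel V)) :
    (inputsOf (l :: p) <+: inputsOf (l :: q) ∨ inputsOf (l :: q) <+: inputsOf (l :: p)) ↔
      (inputsOf p <+: inputsOf q ∨ inputsOf q <+: inputsOf p) := by
  cases l <;> simp [inputsOf]

/-- From a common state, a deterministic system can only diverge at an input where the two
runs read different values. -/
theorem SysDet.prefix_or_prefix (hdet : SysDet tr) {s s₁ s₂ : St} {p q : List (SysLabel V)}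
    (hp : Reaches tr s p s₁) (hq : Reaches tr s q s₂)
    (hin : inputsOf p <+: inputsOf q ∨ inputsOf q <+: inputsOf p) :
    p <+: q ∨ q <+: p := by
  induction hp generalizing q with
  | nil => exact .inl List.nil_prefix
  | @cons s m _ l p hl _ ih =>
    obtain _ | ⟨hl', hq'⟩ := hq
    · exact .inr List.nil_prefix
    rename_i l' q
    by_cases hll : l = l'
    · subst hll
      cases hdet.2 _ _ _ _ hl hl'
      rw [inputsOf_cons_comparable_iff] at hin
      simpa only [List.cons_prefix_cons, true_and] using ih hq' hin
    · obtain ⟨v₁, v₂, rfl, rfl⟩ := hdet.1 _ _ _ _ _ hl hl' hll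
      simp only [inputsOf_cons_inp, List.cons_prefix_cons] at hin
      exact absurd (hin.elim (·.1) (·.1.symm)) (by simpa using hll)

theorem InstTrace.prefix_or_prefix (hdet : SysDet tr) {s0 : St} {I : ℕ → V}
    {p q : List (SysLabel V)} (hp : InstTrace tr s0 I p) (hq : InstTrace tr s0 I q) :
    p <+: q ∨ q <+: p := by
  obtain ⟨⟨_, hrp⟩, hIp⟩ := hp
  obtain ⟨⟨_, hrq⟩, hIq⟩ := hq
  exact hdet.prefix_or_prefix hrp hrq (List.prefix_or_prefix_of_getElem_eq hIp hIq)

end Determinism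

section Sessions

variable {St V : Type} {tr : St → SysLabel V → St → Prop} {s0 : St} {I : ℕ → V}

theorem InstTrace.append_of_inputFree {t z : List (SysLabel V)} {y : St}
    (ht : InstTrace tr s0 I t) (hr : Reaches tr s0 (t ++ z) y) (hz : InputFree z) :
    InstTrace tr s0 I (t ++ z) := by
  refine ⟨⟨y, hr⟩, fun n hn => ?_⟩
  simp only [List.get_eq_getElem, inputsOf_append, hz.inputsOf_eq_nil, List.append_nil] at hn ⊢
  exact ht.2 n hn

theorem InstTrace.apply_icount_eq {t r : List (SysLabel V)} {w : V}
    (ht : InstTrace tr s0 I (t ++ .beginE :: .inp w :: r)) : I (icount t) = w := by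
  have hinp : inputsOf (t ++ .beginE :: .inp w :: r) = inputsOf t ++ w :: inputsOf r := by simp
  have := ht.2 (inputsOf t).length (by simp [hinp])
  simpa [List.getElem_of_eq hinp, length_inputsOf] using this.symm

theorem BalancedSys.not_append_endE_prefix {u₁ u₂ : List (SysLabel V)}
    (h₁ : BalancedSys u₁) (h₂ : BalancedSys u₂) : ¬ u₁ ++ [.endE] <+: u₂ := by
  intro h
  have hcount := h₂.2 _ h
  have hbal := h₁.1
  simp only [countEEs, countBEs, List.countP_append] at hcount hbal
  simp [hbal] at hcount

theorem BalancedSys.eq_of_append_endE_prefix {u₁ u₂ : List (SysLabel V)}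
    (h₁ : BalancedSys u₁) (h₂ : BalancedSys u₂) (h : u₁ ++ [.endE] <+: u₂ ++ [.endE]) :
    u₁ = u₂ :=
  (List.prefix_concat_iff.mp h).elim List.append_cancel_right
    fun h => absurd h (h₁.not_append_endE_prefix h₂)

theorem BalancedSys.eq_of_prefix_or_prefix {u₁ u₂ z₁ z₂ : List (SysLabel V)}
    (h₁ : BalancedSys u₁) (h₂ : BalancedSys u₂)
    (h : u₁ ++ .endE :: z₁ <+: u₂ ++ .endE :: z₂ ∨ u₂ ++ .endE :: z₂ <+: u₁ ++ .endE :: z₁) :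
    u₁ = u₂ := by
  have hclose : ∀ (a z : List (SysLabel V)), a ++ [.endE] <+: a ++ .endE :: z :=
    fun _ z => ⟨z, by simp⟩
  obtain ⟨L, hL₁, hL₂⟩ : ∃ L, u₁ ++ [.endE] <+: L ∧ u₂ ++ [.endE] <+: L := h.elim
    (fun h => ⟨_, (hclose u₁ z₁).trans h, hclose u₂ z₂⟩)
    (fun h => ⟨_, hclose u₁ z₁, (hclose u₂ z₂).trans h⟩)
  rcases List.prefix_or_prefix_of_prefix hL₁ hL₂ with h' | h'
  exacts [h₁.eq_of_append_endE_prefix h₂ h', (h₂.eq_of_append_endE_prefix h₁ h').symm]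

theorem reaches_of_reaches_after_erasure (hdet : SysDet tr) (hE : InputErasing tr s0)
    {I' : ℕ → V} {t u u' z : List (SysLabel V)} {v w : V} {s₃ s₃' y : St}
    (h1 : InstTrace tr s0 I (t ++ .beginE :: .inp v :: u ++ [.endE]))
    (hr1 : Reaches tr s0 (t ++ .beginE :: .inp v :: u ++ [.endE]) s₃)
    (hbal : BalancedSys u)
    (h2 : InstTrace tr s0 I' (t ++ .beginE :: .inp w :: u' ++ [.endE]))
    (hr2 : Reaches tr s0 (t ++ .beginE :: .inp w :: u' ++ [.endE]) s₃')
    (hbal' : BalancedSys u')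
    (hdiff : ∀ m, m ≠ icount t → I m = I' m)
    (hz : InputFree z) (hy : Reaches tr s₃ z y) :
    ∃ y', Reaches tr s₃' z y' := by
  have hrun : InstTrace tr s0 I (t ++ .beginE :: .inp v :: u ++ .endE :: z) := by
    simpa using h1.append_of_inputFree (Reaches.append_iff.mpr ⟨s₃, hr1, hy⟩) hz
  obtain ⟨u₂, hrun', hbal₂, -⟩ := hE I t u z v hrun hbal I' hdiff
  have hw : I' (icount t) = w :=
    InstTrace.apply_icount_eq (r := u' ++ [.endE]) (by simpa using h2)
  rw [hw] at hrun'
  have hu : u' = u₂ := by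
    refine hbal'.eq_of_prefix_or_prefix hbal₂ (z₁ := []) (z₂ := z) ?_
    simpa using h2.prefix_or_prefix hdet hrun'
  obtain ⟨⟨y', hr'⟩, -⟩ := hrun'
  refine ⟨y', Reaches.of_append_of_functional hdet.2 ?_ hr2⟩
  simpa [hu] using hr'

end Sessions

theorem post_erasure_inputfree_equiv_general {St V : Type}
    (tr : St → SysLabel V → St → Prop) (s0 : St)
    (hdet : SysDet tr) (hE : InputErasing tr s0)
    (I I' : ℕ → V) (t u u' : List (SysLabel V)) (v w : V) (s₃ s₃' : St)
    (h1 : InstTrace tr s0 I (t ++ SysLabel.beginE :: SysLabel.inp v :: u ++ [SysLabel.endE]))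
    (hr1 : Reaches tr s0 (t ++ SysLabel.beginE :: SysLabel.inp v :: u ++ [SysLabel.endE]) s₃)
    (hbal : BalancedSys u)
    (h2 : InstTrace tr s0 I' (t ++ SysLabel.beginE :: SysLabel.inp w :: u' ++ [SysLabel.endE]))
    (hr2 : Reaches tr s0 (t ++ SysLabel.beginE :: SysLabel.inp w :: u' ++ [SysLabel.endE]) s₃')
    (hbal' : BalancedSys u')
    (hdiff : ∀ m, m ≠ icount t → I m = I' m) :
    ∀ z : List (SysLabel V), InputFree z →
      ((∃ y, Reaches tr s₃ z y) ↔ (∃ y, Reaches tr s₃' z y)) := by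
  intro z hz
  constructor
  · rintro ⟨_, hy⟩
    exact reaches_of_reaches_after_erasure hdet hE h1 hr1 hbal h2 hr2 hbal' hdiff hz hy
  · rintro ⟨_, hy⟩
    exact reaches_of_reaches_after_erasure hdet hE h2 hr2 hbal' h1 hr1 hbal
      (fun m hm => (hdiff m hm).symm) hz hy

/-- After matched erasure sessions of S(I) and S(I') (streams differing only at
the erased input) the reached states can perform exactly the same input-free traces. -/
theorem post_erasure_inputfree_equiv {St V : Type}
    (tr : St → SysLabel V → St → Prop) (s0 : St)
    (hdet : SysDet tr) (hwf : WellFormedSys tr s0) (hE : InputErasing tr s0)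
    (I I' : ℕ → V) (t u u' : List (SysLabel V)) (v w : V) (s₃ s₃' : St)
    (h1 : InstTrace tr s0 I (t ++ SysLabel.beginE :: SysLabel.inp v :: u ++ [SysLabel.endE]))
    (hr1 : Reaches tr s0 (t ++ SysLabel.beginE :: SysLabel.inp v :: u ++ [SysLabel.endE]) s₃)
    (hbal : BalancedSys u)
    (h2 : InstTrace tr s0 I' (t ++ SysLabel.beginE :: SysLabel.inp w :: u' ++ [SysLabel.endE]))
    (hr2 : Reaches tr s0 (t ++ SysLabel.beginE :: SysLabel.inp w :: u' ++ [SysLabel.endE]) s₃')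
    (hbal' : BalancedSys u')
    (hdiff : ∀ m, m ≠ icount t → I m = I' m) :
    ∀ z : List (SysLabel V), InputFree z →
      ((∃ y, Reaches tr s₃ z y) ↔ (∃ y, Reaches tr s₃' z y)) :=
  post_erasure_inputfree_equiv_general tr s0 hdet hE I I' t u u' v w s₃ s₃' h1 hr1 hbal h2 hr2 hbal'
    hdiff
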